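/- arXiv:1510.00218 — 2 statements merged into one kernel-verified Lean document; each statement's English description precedes it below -/
import Mathlib

section
/- Let K be a field of characteristic 2 and let D_1, D_2 : K → K be additive maps such that for all a, b ∈ K: D_1(ab) = D_1(a)·b + a·D_1(b) and D_2(ab) = D_2(a)·b + D_1(a)·D_1(b) + a·D_2(b). Suppose x ∈ K satisfies D_1^(3)(x) ≠ 0 and D_1^(4)(x) = 0. Set y := D_1^(2)(x) and D_3 := D_1 ∘ D_2. Then D_3(xy) ≠ D_3(x)·y + D_2(x)·D_1(y) + D_1(x)·D_2(y) + x·D_3(y); indeed D_3(xy) − (D_3(x)·y + D_2(x)·D_1(y) + D_1(x)·D_2(y) + x·D_3(y)) = D_1^(2)(x)·D_1^(3)(x), which is nonzero. -/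
/-- The Messmer–Wood operator `D_3 := D_1 ∘ D_2` (for `p = e = 2`) fails the generalized
Leibniz rule: if `D_1, D_2` are additive, `D_1` is a derivation, `D_2` satisfies
`D_2(ab) = D_2(a)b + D_1(a)D_1(b) + aD_2(b)`, and `x` satisfies `D_1^(3)(x) ≠ 0`,
`D_1^(4)(x) = 0`, then with `y := D_1^(2)(x)` the Leibniz defect of `D_3` at `(x, y)`
equals `D_1^(2)(x) · D_1^(3)(x) ≠ 0`. -/
theorem messmerWood_D3_not_leibniz (K : Type*) [Field K] [CharP K 2]
    (D1 D2 : K → K)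
    (h1add : ∀ a b : K, D1 (a + b) = D1 a + D1 b)
    (h2add : ∀ a b : K, D2 (a + b) = D2 a + D2 b)
    (h1mul : ∀ a b : K, D1 (a * b) = D1 a * b + a * D1 b)
    (h2mul : ∀ a b : K, D2 (a * b) = D2 a * b + D1 a * D1 b + a * D2 b)
    (x : K) (h3 : D1^[3] x ≠ 0) (h4 : D1^[4] x = 0) :
    (D1 (D2 (x * D1^[2] x)) -
        (D1 (D2 x) * D1^[2] x + D2 x * D1 (D1^[2] x) + D1 x * D2 (D1^[2] x) +
          x * D1 (D2 (D1^[2] x)))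
      = D1^[2] x * D1^[3] x) ∧
    D1^[2] x * D1^[3] x ≠ 0 ∧
    D1 (D2 (x * D1^[2] x)) ≠
      D1 (D2 x) * D1^[2] x + D2 x * D1 (D1^[2] x) + D1 x * D2 (D1^[2] x) +
        x * D1 (D2 (D1^[2] x)) := by
  have hit2 : D1^[2] x = D1 (D1 x) := by
    simp [Function.iterate_succ, Function.comp]
  have hit3 : D1^[3] x = D1 (D1 (D1 x)) := by
    simp [Function.iterate_succ, Function.comp]
  have hit4 : D1^[4] x = D1 (D1 (D1 (D1 x))) := by
    simp [Function.iterate_succ, Function.comp]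
  rw [hit4] at h4
  have h3' : D1 (D1 (D1 x)) ≠ 0 := hit3 ▸ h3
  rw [hit2, hit3]
  have h10 : D1 0 = 0 := by
    have := h1add 0 0
    simpa using this
  have key : D1 (D2 (x * D1 (D1 x))) -
      (D1 (D2 x) * D1 (D1 x) + D2 x * D1 (D1 (D1 x)) + D1 x * D2 (D1 (D1 x)) +
        x * D1 (D2 (D1 (D1 x)))) = D1 (D1 x) * D1 (D1 (D1 x)) := by
    rw [h2mul, h1add, h1add, h1mul, h1mul, h1mul]
    linear_combination D1 x * h4
  have h2ne : D1 (D1 x) ≠ 0 := by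
    intro h0
    apply h3'
    rw [h0, h10]
  refine ⟨key, mul_ne_zero h2ne h3', fun h => ?_⟩
  rw [h, sub_self] at key
  exact (mul_ne_zero h2ne h3') key.symm
end

section
/- Let (K, D) be a model of W_e-DCF, write ∂_m := D_{𝐞_m} for 1 ≤ m ≤ e, set F_m := ⋂_{j=m}^{e} ker ∂_j for 1 ≤ m ≤ e and F_{e+1} := K. Suppose x_1,…,x_e ∈ K satisfy x_m ∈ F_{m+1} and ∂_m(x_m) = 1 for every 1 ≤ m ≤ e. Then (∂_1)^(p^e − 1)(x_1^{p−1}·x_2^{p−1}···x_e^{p−1}) = ((p−1)!)^e · 1_K, and this element is nonzero. -/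
noncomputable section

open scoped BigOperators

/-- The `m`-th Witt addition polynomial with coefficients reduced mod `p`. -/
def wittHmod (p : ℕ) [Fact p.Prime] (m : ℕ) : MvPolynomial (Fin 2 × ℕ) (ZMod p) :=
  MvPolynomial.map (Int.castRingHom (ZMod p)) (WittVector.wittAdd p m)

/-- The exponent (as a finitely supported function) of the monomial `X̄^i * Ȳ^j`,
where `X_{m+1}` is the variable `(0, m)` and `Y_{m+1}` is the variable `(1, m)`. -/
def xyExp (e : ℕ) (i j : Fin e → ℕ) : (Fin 2 × ℕ) →₀ ℕ :=
  ∑ m : Fin e, (Finsupp.single ((0 : Fin 2), (m : ℕ)) (i m) +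
    Finsupp.single ((1 : Fin 2), (m : ℕ)) (j m))

/-- `wittAlpha p e i j l` is the coefficient `α_{i,j}(l) ∈ 𝔽_p` of the monomial `X̄^i * Ȳ^j` in
`H_1^{l_1} ⋯ H_e^{l_e}`, where `H_1, …, H_e` are the polynomials giving the group law of the
`e`-dimensional Witt group over `𝔽_p`. -/
def wittAlpha (p : ℕ) [Fact p.Prime] (e : ℕ) (i j l : Fin e → ℕ) : ZMod p :=
  MvPolynomial.coeff (xyExp e i j) (∏ m : Fin e, (wittHmod p (m : ℕ)) ^ (l m))

/-- `(K, D)` is a model of `W_e`-DCF:  `K` is a separably closed field of characteristic `p` with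
`[K : K^p] = p^e` (where `K^p` is the subfield of `p`-th powers, i.e. the range of the Frobenius)
and `D` is a strict `W_e`-iterative Hasse–Schmidt derivation of dimension `e`.  Multi-indices
`𝐢 ∈ ℕ^e` are represented as functions `Fin e → ℕ`, and the scalars `α_{𝐢,𝐣}(𝐥) ∈ 𝔽_p` act on `K`
via `ZMod.cast` (the iterated sum of `1`). -/
def IsWeDCF (p e : ℕ) [Fact p.Prime] (K : Type*) [Field K] [CharP K p]
    (D : (Fin e → ℕ) → K → K) : Prop :=
  IsSepClosed K ∧
  Module.finrank ↥(RingHom.fieldRange (frobenius K p)) K = p ^ e ∧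
  D 0 = id ∧
  (∀ i : Fin e → ℕ, ∀ x y : K, D i (x + y) = D i x + D i y) ∧
  (∀ i : Fin e → ℕ, ∀ x y : K, D i (x * y) =
     ∑ k ∈ Finset.Iic i, D k x * D (i - k) y) ∧
  (∀ i j : Fin e → ℕ, ∀ x : K,
     D i (D j x) = ∑ᶠ l : Fin e → ℕ, ZMod.cast (wittAlpha p e i j l) * D l x) ∧
  (∀ x : K, (∀ m : Fin e, D (Pi.single m 1) x = 0) ↔ ∃ y : K, x = y ^ p)

/-!
Witt-iterativity expresses `∂_m ∘ D_{k𝐞_m}` through coefficients of the Witt addition polynomials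
`S_n`, and only a few of them matter: `S_n` is isobaric of weight `p^n` for the weight `p^i` on
`X_i, Y_i`, it equals `X_n + Y_n` modulo variables of index `< n`, and `S_{m+1}` contains
`-X_m Y_m^{p-1}`. Hence `∂_m^k = k! • D_{k𝐞_m}` for `k < p`, and
`∂_m^p = -(p-1)! • ∂_{m+1} = ∂_{m+1}` by Wilson's theorem, so `∂_1^{p^k} = ∂_{k+1}`.
As `p^e - 1 = ∑_k (p-1) p^k`, the operator `∂_1^{p^e-1}` is the composite of the `∂_{k+1}^{p-1}`,
and `∂_{k+1}^{p-1}` sends `x_{k+1}^{p-1}` to `(p-1)!` while treating `x_1, …, x_k` as constants.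
-/

open MvPolynomial Finset

namespace MvPolynomial

variable {σ R S : Type*} [CommSemiring R] [CommSemiring S]

theorem coeff_eq_zero_of_mem_supported {s : Set σ} {φ : MvPolynomial σ R}
    (hφ : φ ∈ supported R s) {d : σ →₀ ℕ} {v : σ} (hv : d v ≠ 0) (hvs : v ∉ s) :
    coeff d φ = 0 := by
  by_contra h
  exact hvs (mem_supported.1 hφ
    (support_subset_vars_of_mem_support (mem_support_iff.2 h) (Finsupp.mem_support_iff.2 hv)))

theorem coeff_X_add_X_pow {a b : σ} (hab : a ≠ b) (i j : ℕ) :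
    coeff (Finsupp.single a i + Finsupp.single b j) ((X a + X b : MvPolynomial σ R) ^ (i + j)) =
      ((i + j).choose i : R) := by
  have hinj : Function.Injective ![a, b] := by
    intro x y; fin_cases x <;> fin_cases y <;> simp [hab, hab.symm]
  have hX : (X a + X b : MvPolynomial σ R) = rename ![a, b] (X 0 + X 1) := by simp
  have hd : Finsupp.single a i + Finsupp.single b j =
      Finsupp.mapDomain ![a, b] (Finsupp.single 0 i + Finsupp.single 1 j) := by
    simp [Finsupp.mapDomain_add, Finsupp.mapDomain_single]
  rw [hX, ← map_pow, hd, coeff_rename_mapDomain _ hinj, coeff_add_pow]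
  simp

theorem coeff_X_add_X_add_pow {a b : σ} (hab : a ≠ b) {s : Set σ} (ha : a ∉ s) (hb : b ∉ s)
    {φ : MvPolynomial σ R} (hφ : φ ∈ supported R s) (i j : ℕ) :
    coeff (Finsupp.single a i + Finsupp.single b j) ((X a + X b + φ) ^ (i + j)) =
      ((i + j).choose i : R) := by
  classical
  -- grade by the number of occurrences of variables outside `s`
  set w : σ → ℕ := fun v => if v ∈ s then 0 else 1
  have hφw : IsWeightedHomogeneous w φ 0 := fun d hd => by
    rw [Finsupp.weight_apply, Finsupp.sum]
    refine sum_eq_zero fun v hv => ?_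
    simp [w, mem_supported.1 hφ (support_subset_vars_of_mem_support (mem_support_iff.2 hd) hv)]
  have hwa : w a = 1 := by simp [w, ha]
  have hwb : w b = 1 := by simp [w, hb]
  have hXw : IsWeightedHomogeneous w (X a + X b : MvPolynomial σ R) 1 :=
    (hwa ▸ isWeightedHomogeneous_X R w a).add (hwb ▸ isWeightedHomogeneous_X R w b)
  rw [add_pow, coeff_sum, sum_eq_single (i + j)]
  · simp [coeff_X_add_X_pow hab]
  · intro k _ hk
    rw [mul_comm, ← map_natCast C, coeff_C_mul, ((hXw.pow k).mul (hφw.pow _)).coeff_eq_zero,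
      mul_zero]
    simpa [Finsupp.weight_single, hwa, hwb] using hk.symm
  · simp

theorem IsWeightedHomogeneous.map {M : Type*} [AddCommMonoid M] {w : σ → M}
    {φ : MvPolynomial σ R} {n : M} (hφ : IsWeightedHomogeneous w φ n) (f : R →+* S) :
    IsWeightedHomogeneous w (map f φ) n := fun d hd =>
  hφ fun h => hd (by rw [coeff_map, h, map_zero])

theorem map_mem_supported {s : Set σ} {φ : MvPolynomial σ R} (hφ : φ ∈ supported R s)
    (f : R →+* S) : map f φ ∈ supported S s :=
  mem_supported.2 ((Finset.coe_subset.2 (vars_map _ _)).trans (mem_supported.1 hφ))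

theorem coeff_mul_eq_zero_of_mem_supported {s : Set σ} {φ : MvPolynomial σ R}
    (hφ : φ ∈ supported R s) (h0 : constantCoeff φ = 0) {d : σ →₀ ℕ} (hd : ∀ v ∈ s, d v = 0)
    (ψ : MvPolynomial σ R) : coeff d (φ * ψ) = 0 := by
  classical
  rw [coeff_mul]
  refine Finset.sum_eq_zero fun x hx => ?_
  obtain h | h := eq_or_ne x.1 0
  · rw [h, ← constantCoeff_eq, h0, zero_mul]
  · obtain ⟨v, hv⟩ : ∃ v, x.1 v ≠ 0 := Finsupp.ne_iff.1 h
    have hvs : v ∉ s := fun hvs => hv (by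
      have := DFunLike.congr_fun (Finset.HasAntidiagonal.mem_antidiagonal.1 hx) v
      simp only [Finsupp.add_apply, hd v hvs] at this
      omega)
    rw [coeff_eq_zero_of_mem_supported hφ hv hvs, zero_mul]

end MvPolynomial

namespace WittVector

variable (p : ℕ) [hp : Fact p.Prime]

def wittWeight : Fin 2 × ℕ → ℕ := fun v => p ^ v.2

/-- The ghost-component identity `w_n(S_0, …, S_n) = w_n(X) + w_n(Y)`. -/
theorem sum_C_mul_wittAdd_pow (n : ℕ) :
    ∑ i ∈ range (n + 1), C ((p : ℤ) ^ i) * wittAdd p i ^ p ^ (n - i) =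
      ∑ i ∈ range (n + 1),
        C ((p : ℤ) ^ i) * (X (0, i) ^ p ^ (n - i) + X (1, i) ^ p ^ (n - i)) := by
  have h := wittStructureInt_prop p (X (0 : Fin 2) + X 1) n
  rw [map_add, bind₁_X_right, bind₁_X_right, bind₁, aeval_wittPolynomial,
    wittPolynomial_eq_sum_C_mul_X_pow, map_sum, map_sum, ← sum_add_distrib] at h
  refine Eq.trans ?_ (h.trans (sum_congr rfl fun i _ => ?_))
  · simp [wittAdd]
  · simp [mul_add]

theorem isWeightedHomogeneous_wittAdd (n : ℕ) :
    IsWeightedHomogeneous (wittWeight p) (wittAdd p n) (p ^ n) := by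
  induction n using Nat.strong_induction_on with
  | _ n ih =>
  have hpow : ∀ i ≤ n, ∀ φ : MvPolynomial (Fin 2 × ℕ) ℤ,
      IsWeightedHomogeneous (wittWeight p) φ (p ^ i) →
      IsWeightedHomogeneous (wittWeight p) (φ ^ p ^ (n - i)) (p ^ n) := by
    intro i hi φ hφ
    have h := hφ.pow (p ^ (n - i))
    rwa [smul_eq_mul, ← pow_add, Nat.sub_add_cancel hi] at h
  have hsum := sum_C_mul_wittAdd_pow p n
  rw [sum_range_succ, Nat.sub_self, pow_zero, pow_one] at hsum
  have hC : IsWeightedHomogeneous (wittWeight p) (C ((p : ℤ) ^ n) * wittAdd p n) (p ^ n) := by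
    rw [eq_sub_of_add_eq' hsum]
    refine .sub (.sum _ _ _ fun i hi => .C_mul (.add ?_ ?_) _)
      (.sum _ _ _ fun i hi => .C_mul (hpow i (mem_range.1 hi).le _ (ih i (mem_range.1 hi))) _)
    all_goals exact hpow i (mem_range_succ_iff.1 hi) _ (isWeightedHomogeneous_X ℤ _ _)
  refine fun d hd => hC ?_
  rw [coeff_C_mul]
  exact mul_ne_zero (pow_ne_zero _ (Int.natCast_ne_zero.2 hp.out.ne_zero)) hd

theorem wittAdd_mem_supported {i n : ℕ} (h : i < n) :
    wittAdd p i ∈ supported ℤ {v : Fin 2 × ℕ | v.2 < n} :=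
  mem_supported.2 fun _ hv => (mem_range.1 (mem_product.1 (wittAdd_vars p i hv)).2).trans_le h

theorem wittAdd_sub_X_sub_X_mem_supported (n : ℕ) :
    wittAdd p n - X (0, n) - X (1, n) ∈ supported ℤ {v : Fin 2 × ℕ | v.2 < n} := by
  set s := {v : Fin 2 × ℕ | v.2 < n}
  have hsum := sum_C_mul_wittAdd_pow p n
  simp only [sum_range_succ, Nat.sub_self, pow_zero, pow_one] at hsum
  have hC : C ((p : ℤ) ^ n) * (wittAdd p n - X (0, n) - X (1, n)) ∈ supported ℤ s := by
    have hCs : ∀ c : ℤ, C c ∈ supported ℤ s := fun c => (supported ℤ s).algebraMap_mem c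
    rw [show C ((p : ℤ) ^ n) * (wittAdd p n - X (0, n) - X (1, n)) =
        ∑ i ∈ range n, C ((p : ℤ) ^ i) * (X (0, i) ^ p ^ (n - i) + X (1, i) ^ p ^ (n - i)) -
          ∑ i ∈ range n, C ((p : ℤ) ^ i) * wittAdd p i ^ p ^ (n - i) by linear_combination hsum]
    refine sub_mem (sum_mem fun i hi => mul_mem (hCs _) (add_mem ?_ ?_))
      (sum_mem fun i hi =>
        mul_mem (hCs _) (pow_mem (wittAdd_mem_supported p (mem_range.1 hi)) _))
    all_goals
      apply pow_mem
      rw [X_mem_supported]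
      exact mem_range.1 hi
  rwa [mem_supported, vars_C_mul _ (pow_ne_zero _ (Int.natCast_ne_zero.2 hp.out.ne_zero)),
    ← mem_supported] at hC

theorem coeff_wittAdd_succ (m : ℕ) :
    MvPolynomial.coeff (Finsupp.single (0, m) 1 + Finsupp.single (1, m) (p - 1))
      (wittAdd p (m + 1)) = -1 := by
  set d : Fin 2 × ℕ →₀ ℕ := Finsupp.single (0, m) 1 + Finsupp.single (1, m) (p - 1)
  have hp1 := hp.out.one_lt
  have hd0 : d (0, m) ≠ 0 := by simp [d]
  have hd1 : d (1, m) ≠ 0 := by simp [d]; omega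
  have hlow : ∀ i ∈ range m,
      MvPolynomial.coeff d (C ((p : ℤ) ^ i) * wittAdd p i ^ p ^ (m + 1 - i)) = 0 := fun i hi => by
    rw [coeff_C_mul, coeff_eq_zero_of_mem_supported
      (pow_mem (wittAdd_mem_supported p (mem_range.1 hi)) _) hd0 (lt_irrefl m), mul_zero]
  have hghost : ∀ i ∈ range (m + 2), MvPolynomial.coeff d
      (C ((p : ℤ) ^ i) * (X (0, i) ^ p ^ (m + 1 - i) + X (1, i) ^ p ^ (m + 1 - i))) = 0 :=
    fun i _ => by
      rw [coeff_C_mul, coeff_add,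
        coeff_eq_zero_of_mem_supported (pow_mem ((X_mem_supported (s := {(0, i)})).2 rfl) _) hd1
          (by simp),
        coeff_eq_zero_of_mem_supported (pow_mem ((X_mem_supported (s := {(1, i)})).2 rfl) _) hd0
          (by simp)]
      simp
  have hmid : MvPolynomial.coeff d (wittAdd p m ^ p) = p := by
    have h := coeff_X_add_X_add_pow (R := ℤ) (a := (0, m)) (b := (1, m)) (by simp) (lt_irrefl m)
      (lt_irrefl m) (wittAdd_sub_X_sub_X_mem_supported p m) 1 (p - 1)
    rwa [sub_sub, add_sub_cancel, Nat.add_sub_cancel' hp1.le, Nat.choose_one_right] at h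
  -- the coefficient of `d` in the ghost identity reads `p^m * p + p^(m+1) * c = 0`
  have key := congrArg (MvPolynomial.coeff d) (sum_C_mul_wittAdd_pow p (m + 1))
  rw [coeff_sum, coeff_sum, sum_eq_zero hghost, sum_range_succ, sum_range_succ, sum_eq_zero hlow,
    coeff_C_mul, coeff_C_mul, Nat.sub_self, pow_zero, pow_one, Nat.add_sub_cancel_left, pow_one,
    hmid] at key
  have hpm : ((p : ℤ) ^ (m + 1)) ≠ 0 := pow_ne_zero _ (Int.natCast_ne_zero.2 hp.out.ne_zero)
  exact mul_left_cancel₀ hpm (by linear_combination key)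

end WittVector

theorem apply_eq_zero_of_sum_mul_pow_eq {p e c : ℕ} (hp : 1 < p) (hc : c ≤ p) {m : Fin e}
    {l : Fin e → ℕ} (hsum : ∑ j, l j * p ^ (j : ℕ) = c * p ^ (m : ℕ)) {j : Fin e}
    (hj : (m : ℕ) + 1 < j) : l j = 0 := by
  by_contra hl
  have hle : l j * p ^ (j : ℕ) ≤ c * p ^ (m : ℕ) :=
    hsum ▸ Finset.single_le_sum (f := fun j => l j * p ^ (j : ℕ)) (fun _ _ => Nat.zero_le _)
      (Finset.mem_univ j)
  have h1 : p ^ ((m : ℕ) + 2) ≤ p ^ (j : ℕ) := Nat.pow_le_pow_right (by omega) hj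
  have h2 : p ^ (j : ℕ) ≤ l j * p ^ (j : ℕ) := Nat.le_mul_of_pos_left _ (Nat.pos_of_ne_zero hl)
  have h3 : c * p ^ (m : ℕ) < p ^ ((m : ℕ) + 2) := calc
    c * p ^ (m : ℕ) ≤ p * p ^ (m : ℕ) := Nat.mul_le_mul_right _ hc
    _ < p * p * p ^ (m : ℕ) := Nat.mul_lt_mul_of_pos_right (by nlinarith) (pow_pos (by omega) _)
    _ = p ^ ((m : ℕ) + 2) := by ring
  omega

theorem eq_pi_single_of_sum_mul_pow_eq {p e c : ℕ} (hp : 1 < p) (hc : c ≤ p) {m : Fin e}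
    {l : Fin e → ℕ} (hlow : ∀ j < m, l j = 0) (hsum : ∑ j, l j * p ^ (j : ℕ) = c * p ^ (m : ℕ)) :
    l = Pi.single m c ∨ c = p ∧ ∃ j : Fin e, (j : ℕ) = m + 1 ∧ l = Pi.single j 1 := by
  have hpm : 0 < p ^ (m : ℕ) := pow_pos (by omega) _
  have hfar := fun j => apply_eq_zero_of_sum_mul_pow_eq hp hc hsum (j := j)
  by_cases hnext : ∃ j : Fin e, (j : ℕ) = m + 1 ∧ l j ≠ 0
  · obtain ⟨j, hj, hlj⟩ := hnext
    have hzero : ∀ i, i ≠ m ∧ i ≠ j → l i = 0 := fun i ⟨him, hij⟩ => by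
      rcases lt_trichotomy i m with h | rfl | h
      · exact hlow i h
      · exact absurd rfl him
      · exact hfar i (by have := Fin.val_ne_of_ne hij; have := Fin.lt_def.1 h; omega)
    rw [Fintype.sum_eq_add m j (fun h => by rw [← h] at hj; omega)
      fun i hi => by rw [hzero i hi, zero_mul], hj, pow_succ] at hsum
    have hsum' : (l m + l j * p) * p ^ (m : ℕ) = c * p ^ (m : ℕ) := by linarith
    have hsum'' := Nat.eq_of_mul_eq_mul_right hpm hsum'
    have hlj1 : l j = 1 := by nlinarith [Nat.pos_of_ne_zero hlj]
    refine .inr ⟨by nlinarith, j, hj, funext fun i => ?_⟩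
    rcases eq_or_ne i j with rfl | hij
    · simp [hlj1]
    · rw [Pi.single_eq_of_ne hij]
      rcases eq_or_ne i m with rfl | him
      · nlinarith
      · exact hzero i ⟨him, hij⟩
  · push Not at hnext
    have hzero : ∀ i ≠ m, l i = 0 := fun i him => by
      rcases lt_trichotomy i m with h | rfl | h
      · exact hlow i h
      · exact absurd rfl him
      · rcases eq_or_lt_of_le (Nat.succ_le_of_lt (Fin.lt_def.1 h)) with h' | h'
        · exact hnext i h'.symm
        · exact hfar i h'
    rw [Fintype.sum_eq_single m fun i hi => by rw [hzero i hi, zero_mul]] at hsum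
    refine .inl (funext fun i => ?_)
    rcases eq_or_ne i m with rfl | him
    · simpa using Nat.eq_of_mul_eq_mul_right hpm hsum
    · rw [Pi.single_eq_of_ne him, hzero i him]

section WittAlpha

variable (p : ℕ) [hp : Fact p.Prime] {e : ℕ}

theorem isWeightedHomogeneous_wittHmod (n : ℕ) :
    IsWeightedHomogeneous (WittVector.wittWeight p) (wittHmod p n) (p ^ n) :=
  (WittVector.isWeightedHomogeneous_wittAdd p n).map _

theorem wittHmod_mem_supported {i n : ℕ} (h : i < n) :
    wittHmod p i ∈ supported (ZMod p) {v : Fin 2 × ℕ | v.2 < n} :=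
  map_mem_supported (WittVector.wittAdd_mem_supported p h) _

theorem constantCoeff_wittHmod (n : ℕ) : constantCoeff (wittHmod p n) = 0 := by
  rw [wittHmod, constantCoeff_map, WittVector.constantCoeff_wittAdd, map_zero]

theorem wittHmod_sub_X_sub_X_mem_supported (n : ℕ) :
    wittHmod p n - X (0, n) - X (1, n) ∈ supported (ZMod p) {v : Fin 2 × ℕ | v.2 < n} := by
  simpa [wittHmod] using map_mem_supported (WittVector.wittAdd_sub_X_sub_X_mem_supported p n)
    (Int.castRingHom (ZMod p))

theorem xyExp_single_single (m : Fin e) (a b : ℕ) :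
    xyExp e (Pi.single m a) (Pi.single m b) =
      Finsupp.single (0, (m : ℕ)) a + Finsupp.single (1, (m : ℕ)) b := by
  rw [xyExp, Fintype.sum_eq_single m fun j hj => by simp [Pi.single_eq_of_ne hj]]
  simp

theorem wittAlpha_single_single (m : Fin e) (k : ℕ) :
    wittAlpha p e (Pi.single m 1) (Pi.single m k) (Pi.single m (k + 1)) = k + 1 := by
  have h := coeff_X_add_X_add_pow (R := ZMod p) (a := ((0 : Fin 2), (m : ℕ))) (b := (1, m))
    (by simp) (lt_irrefl (m : ℕ)) (lt_irrefl (m : ℕ)) (wittHmod_sub_X_sub_X_mem_supported p m) 1 k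
  rw [sub_sub, add_sub_cancel, add_comm 1 k, Nat.choose_one_right] at h
  rw [wittAlpha, xyExp_single_single, Fintype.prod_eq_single m fun j hj => by
    simp [Pi.single_eq_of_ne hj]]
  simpa using h

theorem wittAlpha_single_pred_single_succ (m : Fin e) (hm : (m : ℕ) + 1 < e) :
    wittAlpha p e (Pi.single m 1) (Pi.single m (p - 1)) (Pi.single ⟨m + 1, hm⟩ 1) = -1 := by
  rw [wittAlpha, xyExp_single_single, Fintype.prod_eq_single ⟨m + 1, hm⟩ fun j hj => by
    simp [Pi.single_eq_of_ne hj]]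
  rw [Pi.single_eq_same, pow_one, wittHmod, coeff_map, WittVector.coeff_wittAdd_succ]
  simp

theorem wittAlpha_single_single_ne_zero {m : Fin e} {k : ℕ} {l : Fin e → ℕ}
    (hα : wittAlpha p e (Pi.single m 1) (Pi.single m k) l ≠ 0) :
    (∀ j < m, l j = 0) ∧ ∑ j, l j * p ^ (j : ℕ) = (k + 1) * p ^ (m : ℕ) := by
  rw [wittAlpha, xyExp_single_single] at hα
  refine ⟨fun j hj => by_contra fun hl => hα ?_, ?_⟩
  · obtain ⟨c, hc⟩ := Nat.exists_eq_succ_of_ne_zero hl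
    rw [← Finset.mul_prod_erase _ _ (Finset.mem_univ j), hc, pow_succ', mul_assoc]
    refine coeff_mul_eq_zero_of_mem_supported (wittHmod_mem_supported p (Fin.lt_def.1 hj))
      (constantCoeff_wittHmod p j) (fun v hv => ?_) _
    have hv : v.2 < m := hv
    simp [Prod.ext_iff, hv.ne']
  · have hw := (IsWeightedHomogeneous.prod Finset.univ (fun j : Fin e => wittHmod p j ^ l j) _
      fun j _ => (isWeightedHomogeneous_wittHmod p j).pow (l j)) hα
    simp only [map_add, Finsupp.weight_single, smul_eq_mul, WittVector.wittWeight] at hw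
    linarith

variable {p}

theorem wittAlpha_single_single_eq_zero {m : Fin e} {k : ℕ} (hk : k + 1 < p) {l : Fin e → ℕ}
    (hl : l ≠ Pi.single m (k + 1)) : wittAlpha p e (Pi.single m 1) (Pi.single m k) l = 0 := by
  by_contra hα
  obtain ⟨hlow, hsum⟩ := wittAlpha_single_single_ne_zero p hα
  rcases eq_pi_single_of_sum_mul_pow_eq hp.out.one_lt hk.le hlow hsum with h | ⟨h, -⟩
  · exact hl h
  · omega

theorem wittAlpha_single_pred_eq_zero {m : Fin e} (hm : (m : ℕ) + 1 < e) {l : Fin e → ℕ}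
    (hl : l ≠ Pi.single ⟨m + 1, hm⟩ 1) :
    wittAlpha p e (Pi.single m 1) (Pi.single m (p - 1)) l = 0 := by
  by_contra hα
  obtain ⟨hlow, hsum⟩ := wittAlpha_single_single_ne_zero p hα
  rw [Nat.sub_add_cancel hp.out.one_le] at hsum
  rcases eq_pi_single_of_sum_mul_pow_eq hp.out.one_lt le_rfl hlow hsum with rfl | ⟨-, j, hj, rfl⟩
  · -- the only other candidate `l = p • e_m` has coefficient `p = 0` in `𝔽_p`
    have h := wittAlpha_single_single p m (p - 1)
    rw [Nat.sub_add_cancel hp.out.one_le, Nat.cast_sub hp.out.one_le] at h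
    simp [h] at hα
  · exact hl (by rw [show j = ⟨m + 1, hm⟩ from Fin.ext hj])

end WittAlpha

namespace Derivation

variable {R A : Type*} [CommSemiring R] [CommSemiring A] [Algebra R A] (d : Derivation R A A)

theorem iterate_mul_of_apply_eq_zero {a : A} (ha : d a = 0) (n : ℕ) (b : A) :
    (⇑d)^[n] (a * b) = a * (⇑d)^[n] b := by
  induction n with
  | zero => rfl
  | succ n ih =>
    rw [Function.iterate_succ_apply', ih, leibniz, ha, smul_zero, add_zero, smul_eq_mul,
      Function.iterate_succ_apply']

theorem iterate_pow_self {z : A} (hz : d z = 1) (n : ℕ) : (⇑d)^[n] (z ^ n) = n.factorial := by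
  induction n with
  | zero => simp
  | succ n ih =>
    rw [Function.iterate_succ_apply, leibniz_pow, hz, smul_eq_mul, mul_one, Nat.add_sub_cancel,
      nsmul_eq_mul, iterate_mul_of_apply_eq_zero _ (d.map_natCast _), ih, Nat.factorial_succ,
      Nat.cast_mul]

theorem apply_prod_eq_zero {ι : Type*} (s : Finset ι) {f : ι → A} (hf : ∀ i ∈ s, d (f i) = 0) :
    d (∏ i ∈ s, f i) = 0 :=
  Finset.prod_induction _ (fun a => d a = 0)
    (fun a b ha hb => by rw [leibniz, ha, hb, smul_zero, smul_zero, add_zero]) d.map_one_eq_zero hf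

end Derivation

theorem Finset.Iic_pi_single_one {e : ℕ} (m : Fin e) :
    Finset.Iic (Pi.single m 1 : Fin e → ℕ) = {0, Pi.single m 1} := by
  ext k
  simp only [Finset.mem_Iic, Finset.mem_insert, Finset.mem_singleton]
  refine ⟨fun hk => ?_, by rintro (rfl | rfl) <;> simp⟩
  obtain h | h := Nat.le_one_iff_eq_zero_or_eq_one.1 (by simpa using hk m)
  · refine .inl (funext fun j => ?_)
    rcases eq_or_ne j m with rfl | hj
    · exact h
    · simpa [hj] using hk j
  · refine .inr (funext fun j => ?_)
    rcases eq_or_ne j m with rfl | hj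
    · simpa using h
    · simpa [hj] using hk j

section HasseSchmidt

variable {e : ℕ} {K : Type*} [CommRing K]

structure IsHasseSchmidt (D : (Fin e → ℕ) → K → K) : Prop where
  map_zero_eq_id : D 0 = id
  map_add : ∀ i x y, D i (x + y) = D i x + D i y
  map_mul : ∀ i x y, D i (x * y) = ∑ k ∈ Finset.Iic i, D k x * D (i - k) y

def IsWittIterative (p : ℕ) [Fact p.Prime] (D : (Fin e → ℕ) → K → K) : Prop :=
  ∀ i j x, D i (D j x) = ∑ᶠ l : Fin e → ℕ, ZMod.cast (wittAlpha p e i j l) * D l x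

namespace IsHasseSchmidt

variable {D : (Fin e → ℕ) → K → K}

theorem map_mul_single (hD : IsHasseSchmidt D) (m : Fin e) (x y : K) :
    D (Pi.single m 1) (x * y) = x * D (Pi.single m 1) y + y * D (Pi.single m 1) x := by
  rw [hD.map_mul, Finset.Iic_pi_single_one,
    Finset.sum_pair (Pi.single_ne_zero_iff.2 one_ne_zero).symm, tsub_zero, tsub_self,
    hD.map_zero_eq_id]
  simp [mul_comm]

def derivation (hD : IsHasseSchmidt D) (m : Fin e) : Derivation ℤ K K :=
  Derivation.mk' (AddMonoidHom.mk' (D (Pi.single m 1)) (hD.map_add _)).toIntLinearMap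
    (hD.map_mul_single m)

theorem coe_derivation (hD : IsHasseSchmidt D) (m : Fin e) :
    ⇑(hD.derivation m) = D (Pi.single m 1) := rfl

end IsHasseSchmidt

end HasseSchmidt

theorem IsWeDCF.isHasseSchmidt {p e : ℕ} [Fact p.Prime] {K : Type*} [Field K] [CharP K p]
    {D : (Fin e → ℕ) → K → K} (hD : IsWeDCF p e K D) : IsHasseSchmidt D :=
  ⟨hD.2.2.1, hD.2.2.2.1, hD.2.2.2.2.1⟩

theorem IsWeDCF.isWittIterative {p e : ℕ} [Fact p.Prime] {K : Type*} [Field K] [CharP K p]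
    {D : (Fin e → ℕ) → K → K} (hD : IsWeDCF p e K D) : IsWittIterative p D :=
  hD.2.2.2.2.2.1

section WittIterative

variable {p e : ℕ} [hp : Fact p.Prime] {K : Type*} [CommRing K] [CharP K p]
  {D : (Fin e → ℕ) → K → K}

theorem cast_factorial_pred_eq_neg_one : ((p - 1).factorial : K) = -1 := by
  have h := congrArg (ZMod.castHom (dvd_refl p) K) (ZMod.wilsons_lemma (p := p))
  rwa [map_natCast, map_neg, map_one] at h

theorem IsWittIterative.apply_single_of_succ_lt (hW : IsWittIterative p D) {m : Fin e} {k : ℕ}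
    (hk : k + 1 < p) (x : K) :
    D (Pi.single m 1) (D (Pi.single m k) x) = (k + 1 : ℕ) * D (Pi.single m (k + 1)) x := by
  rw [hW, finsum_eq_single _ (Pi.single m (k + 1)) fun l hl => by
    rw [wittAlpha_single_single_eq_zero hk hl, ZMod.cast_zero, zero_mul],
    wittAlpha_single_single, ← Nat.cast_succ, ZMod.cast_natCast dvd_rfl]

theorem IsWittIterative.apply_single_pred (hW : IsWittIterative p D) {m : Fin e}
    (hm : (m : ℕ) + 1 < e) (x : K) :
    D (Pi.single m 1) (D (Pi.single m (p - 1)) x) = -D (Pi.single ⟨m + 1, hm⟩ 1) x := by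
  rw [hW, finsum_eq_single _ (Pi.single ⟨m + 1, hm⟩ 1) fun l hl => by
    rw [wittAlpha_single_pred_eq_zero hm hl, ZMod.cast_zero, zero_mul],
    wittAlpha_single_pred_single_succ, ZMod.cast_neg dvd_rfl, ZMod.cast_one dvd_rfl, neg_one_mul]

theorem IsHasseSchmidt.iterate_derivation_eq_factorial_mul (hD : IsHasseSchmidt D)
    (hW : IsWittIterative p D) (m : Fin e) {k : ℕ} (hk : k < p) (x : K) :
    (⇑(hD.derivation m))^[k] x = k.factorial * D (Pi.single m k) x := by
  induction k with
  | zero => simp [hD.map_zero_eq_id]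
  | succ k ih =>
    rw [Function.iterate_succ_apply', ih (by omega), ← nsmul_eq_mul, map_nsmul, nsmul_eq_mul,
      hD.coe_derivation, hW.apply_single_of_succ_lt hk, Nat.factorial_succ, Nat.cast_mul,
      mul_left_comm, mul_assoc]

theorem IsHasseSchmidt.iterate_derivation_prime (hD : IsHasseSchmidt D)
    (hW : IsWittIterative p D) {m : Fin e} (hm : (m : ℕ) + 1 < e) :
    (⇑(hD.derivation m))^[p] = hD.derivation ⟨m + 1, hm⟩ := by
  funext x
  rw [← Nat.sub_add_cancel hp.out.one_le, Function.iterate_succ_apply',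
    hD.iterate_derivation_eq_factorial_mul hW m (Nat.sub_lt hp.out.pos one_pos), ← nsmul_eq_mul,
    map_nsmul, nsmul_eq_mul, hD.coe_derivation, hW.apply_single_pred hm,
    cast_factorial_pred_eq_neg_one, hD.coe_derivation]
  ring

theorem IsHasseSchmidt.iterate_derivation_pow_prime (hD : IsHasseSchmidt D)
    (hW : IsWittIterative p D) (he : 0 < e) {k : ℕ} (hk : k < e) :
    (⇑(hD.derivation ⟨0, he⟩))^[p ^ k] = hD.derivation ⟨k, hk⟩ := by
  induction k with
  | zero => simp
  | succ k ih =>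
    rw [pow_succ, Function.iterate_mul, ih (by omega), hD.iterate_derivation_prime hW]

theorem IsHasseSchmidt.iterate_derivation_prod_pow_pred (hD : IsHasseSchmidt D)
    (hW : IsWittIterative p D) (he : 0 < e) (x : Fin e → K)
    (hmem : ∀ m j : Fin e, m < j → D (Pi.single j 1) (x m) = 0)
    (hone : ∀ m : Fin e, D (Pi.single m 1) (x m) = 1) {k : ℕ} (hk : k ≤ e) :
    (⇑(hD.derivation ⟨0, he⟩))^[p ^ k - 1] (∏ m : Fin k, x (Fin.castLE hk m) ^ (p - 1)) =
      ((p - 1).factorial : K) ^ k := by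
  induction k with
  | zero => simp
  | succ k ih =>
    have hp := hp.out.one_lt
    have hsplit : p ^ (k + 1) - 1 = (p ^ k - 1) + p ^ k * (p - 1) := by
      have := Nat.one_le_pow k p (by omega)
      have := Nat.le_mul_of_pos_right (p ^ k) (by omega : 0 < p)
      rw [pow_succ, Nat.mul_sub, mul_one]
      omega
    set d := hD.derivation ⟨k, hk⟩
    have hd : ∀ m : Fin k, d (x (Fin.castLE (Nat.le_of_succ_le hk) m) ^ (p - 1)) = 0 :=
      fun m => by
      rw [Derivation.leibniz_pow, hD.coe_derivation, hmem _ _ (Fin.lt_def.2 m.isLt), smul_zero,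
        smul_zero]
    rw [Fin.prod_univ_castSucc, hsplit, Function.iterate_add_apply, Function.iterate_mul,
      hD.iterate_derivation_pow_prime hW he (Nat.lt_of_succ_le hk)]
    simp only [Fin.castLE_castSucc, show Fin.castLE hk (Fin.last k) = ⟨k, hk⟩ from rfl]
    rw [d.iterate_mul_of_apply_eq_zero (d.apply_prod_eq_zero _ fun m _ => hd m),
      d.iterate_pow_self (hone _), mul_comm,
      (hD.derivation _).iterate_mul_of_apply_eq_zero ((hD.derivation _).map_natCast _), ih,
      pow_succ']

end WittIterative

/-- In a model of `W_e`-DCF, writing `∂_m := D_{𝐞_m}` (`0`-indexed as `m : Fin e`), if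
`x_m` lies in `F_{m+1} = ⋂_{j > m} ker ∂_j` and `∂_m(x_m) = 1` for every `m`, then
`(∂_1)^(p^e − 1)(x_1^{p−1} ⋯ x_e^{p−1}) = ((p−1)!)^e`, which is nonzero. -/
theorem WeDCF_iterate_on_product (p e : ℕ) [Fact p.Prime] (he : 1 ≤ e)
    (K : Type*) [Field K] [CharP K p] (D : (Fin e → ℕ) → K → K)
    (hD : IsWeDCF p e K D) (x : Fin e → K)
    (hmem : ∀ m j : Fin e, m < j → D (Pi.single j 1) (x m) = 0)
    (hone : ∀ m : Fin e, D (Pi.single m 1) (x m) = 1) :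
    (D (Pi.single (⟨0, he⟩ : Fin e) 1))^[p ^ e - 1] (∏ m : Fin e, x m ^ (p - 1)) =
      ((Nat.factorial (p - 1) : K)) ^ e ∧
    ((Nat.factorial (p - 1) : K)) ^ e ≠ 0 := by
  have hHS := hD.isHasseSchmidt
  have h := hHS.iterate_derivation_prod_pow_pred hD.isWittIterative he x hmem hone le_rfl
  rw [Fin.castLE_rfl, hHS.coe_derivation] at h
  refine ⟨h, ?_⟩
  rw [cast_factorial_pred_eq_neg_one]
  exact pow_ne_zero _ (neg_ne_zero.2 one_ne_zero)
end
end
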